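/- arXiv:2102.12733 — 7 statements merged into one kernel-verified Lean document; each statement's English description precedes it below -/
import Mathlib

section
/- Let H be a real inner product space, ρ > 0 a real number, and θ₊, γ₊, θ⋆, λ, λ₊ ∈ H. Assume (i) λ₊ = λ + ρ·(θ₊ − γ₊) and (ii) ⟨λ₊, θ⋆ − γ₊⟩ ≤ 0. Then −⟨λ₊, θ₊ − θ⋆⟩ + (ρ/2)·‖θ₊ − γ₊‖² ≤ (1/(2ρ))·(‖λ‖² − ‖λ₊‖²). -/
open scoped InnerProductSpace

/-! With `d = θ₊ - γ₊`, expanding `‖λ‖² = ‖λ₊ - ρ d‖²` shows that the right-hand side equals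
`-⟪λ₊, d⟫ + (ρ/2)‖d‖²` exactly; the left-hand side differs from this by `⟪λ₊, θ⋆ - γ₊⟫ ≤ 0`. -/

theorem one_div_two_mul_mul_norm_sq_sub_norm_add_smul_sq
    {H : Type*} [NormedAddCommGroup H] [InnerProductSpace ℝ H]
    {ρ : ℝ} (hρ : ρ ≠ 0) (lam d : H) :
    1 / (2 * ρ) * (‖lam‖ ^ 2 - ‖lam + ρ • d‖ ^ 2) = -⟪lam + ρ • d, d⟫_ℝ + ρ / 2 * ‖d‖ ^ 2 := by
  rw [norm_add_sq_real, inner_add_left, real_inner_smul_left, real_inner_smul_right,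
    norm_smul, real_inner_self_eq_norm_sq, Real.norm_eq_abs, mul_pow, sq_abs]
  field_simp
  ring

/-- Dual-variable (multiplier) step in the proof of Lemma 2 of the paper. -/
theorem admm_multiplier_step
    {H : Type*} [NormedAddCommGroup H] [InnerProductSpace ℝ H]
    (ρ : ℝ) (hρ : 0 < ρ)
    (θp γp θs lam lamp : H)
    (h1 : lamp = lam + ρ • (θp - γp))
    (h2 : ⟪lamp, θs - γp⟫_ℝ ≤ 0) :
    -⟪lamp, θp - θs⟫_ℝ + (ρ / 2) * ‖θp - γp‖ ^ 2 ≤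
      (1 / (2 * ρ)) * (‖lam‖ ^ 2 - ‖lamp‖ ^ 2) := by
  have hsplit : θp - θs = (θp - γp) - (θs - γp) := by abel
  calc -⟪lamp, θp - θs⟫_ℝ + ρ / 2 * ‖θp - γp‖ ^ 2
      = -⟪lamp, θp - γp⟫_ℝ + ρ / 2 * ‖θp - γp‖ ^ 2 + ⟪lamp, θs - γp⟫_ℝ := by
        rw [hsplit, inner_sub_right]; ring
    _ ≤ -⟪lamp, θp - γp⟫_ℝ + ρ / 2 * ‖θp - γp‖ ^ 2 := by linarith
    _ = 1 / (2 * ρ) * (‖lam‖ ^ 2 - ‖lamp‖ ^ 2) := by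
        rw [h1, one_div_two_mul_mul_norm_sq_sub_norm_add_smul_sq hρ.ne']
end

section
/- (Lemma 2) Work in a real inner product space H. Fix reals ρ > 0 and η > 0. Let θ̂_t, θ̂_{t+1}, γ̂_t, γ̂_{t+1}, λ̂_t, λ̂_{t+1}, θ⋆ ∈ H and let L : H → ℝ satisfy: (R1) L is convex and differentiable at θ̂_{t+1} with gradient ∇L(θ̂_{t+1}) = −λ̂_{t+1} − ρ·(γ̂_{t+1} − γ̂_t) − η·(θ̂_{t+1} − θ̂_t); (R2) λ̂_{t+1} = λ̂_t + ρ·(θ̂_{t+1} − γ̂_{t+1}); (R3) ⟨λ̂_{t+1}, θ⋆ − γ̂_{t+1}⟩ ≤ 0. Then L(θ̂_{t+1}) − L(θ⋆) ≤ (1/(2ρ))·(‖λ̂_t‖² − ‖λ̂_{t+1}‖²) − (ρ/2)·‖θ̂_{t+1} − γ̂_t‖² + (η/2)·(‖θ̂_t − θ⋆‖² − ‖θ̂_{t+1} − θ⋆‖²) − (η/2)·‖θ̂_{t+1} − θ̂_t‖² + (ρ/2)·(‖γ̂_t − θ⋆‖² − ‖γ̂_{t+1} − θ⋆‖²). -/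
open scoped InnerProductSpace

/-!
The first-order condition for the convex loss bounds `L θ̂_{t+1} - L θ⋆` by
`⟪∇L(θ̂_{t+1}), θ̂_{t+1} - θ⋆⟫`. Routing `θ̂_{t+1} - θ⋆` through `γ̂_{t+1}` isolates the term
`⟪λ̂_{t+1}, θ⋆ - γ̂_{t+1}⟫`, which (R3) discards; every other inner product becomes a difference
of squared norms by the three-point identity `2⟪a - b, a - c⟫ = ‖a - b‖² + ‖a - c‖² - ‖b - c‖²`,
and (R2) turns `⟪λ̂_{t+1}, θ̂_{t+1} - γ̂_{t+1}⟫` into the telescoping `‖λ̂_t‖² - ‖λ̂_{t+1}‖²`.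
-/

theorem ConvexOn.hasFDerivAt_apply_sub_le {E : Type*} [NormedAddCommGroup E] [NormedSpace ℝ E]
    {f : E → ℝ} {f' : E →L[ℝ] ℝ} {s : Set E} {x y : E} (hf : ConvexOn ℝ s f)
    (hx : x ∈ s) (hy : y ∈ s) (hf' : HasFDerivAt f f' x) :
    f' (y - x) ≤ f y - f x := by
  let l : ℝ →ᵃ[ℝ] E := AffineMap.lineMap x y
  have hline : ConvexOn ℝ (l ⁻¹' s) (f ∘ l) := hf.comp_affineMap l
  have hderiv : HasDerivAt (f ∘ l) (f' (y - x)) 0 :=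
    (by simpa [l] using hf' : HasFDerivAt f f' (l 0)).comp_hasDerivAt 0
      AffineMap.hasDerivAt_lineMap
  simpa [l, slope_def_field] using
    hline.le_slope_of_hasDerivAt (by simpa [l]) (by simpa [l]) zero_lt_one hderiv

theorem ConvexOn.inner_gradient_sub_le {F : Type*} [NormedAddCommGroup F]
    [InnerProductSpace ℝ F] [CompleteSpace F] {f : F → ℝ} {g x y : F} {s : Set F}
    (hf : ConvexOn ℝ s f) (hx : x ∈ s) (hy : y ∈ s) (hg : HasGradientAt f g x) :
    ⟪g, y - x⟫_ℝ ≤ f y - f x :=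
  hf.hasFDerivAt_apply_sub_le hx hy hg.hasFDerivAt

section InnerProduct

variable {F : Type*} [NormedAddCommGroup F] [InnerProductSpace ℝ F]

theorem two_mul_real_inner_sub_sub (a b c : F) :
    2 * ⟪a - b, a - c⟫_ℝ = ‖a - b‖ ^ 2 + ‖a - c‖ ^ 2 - ‖b - c‖ ^ 2 := by
  have h := norm_sub_sq_real (a - c) (a - b)
  rw [sub_sub_sub_cancel_left, real_inner_comm] at h
  linarith

theorem norm_sq_sub_norm_sq_of_eq_add_smul {u w v : F} {ρ : ℝ} (h : w = u + ρ • v) :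
    ‖u‖ ^ 2 - ‖w‖ ^ 2 = -2 * ρ * ⟪w, v⟫_ℝ + ρ ^ 2 * ‖v‖ ^ 2 := by
  rw [eq_sub_of_add_eq h.symm, norm_sub_sq_real, real_inner_smul_right, norm_smul,
    mul_pow, Real.norm_eq_abs, sq_abs]
  ring

end InnerProduct

theorem domkl_lemma2_general
    {H : Type*} [NormedAddCommGroup H] [InnerProductSpace ℝ H] [CompleteSpace H]
    (ρ η : ℝ) (hρ : 0 < ρ)
    (θt θt1 γt γt1 lamt lamt1 θs : H) (L : H → ℝ)
    (hconv : ConvexOn ℝ Set.univ L)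
    (hgrad : HasGradientAt L (-lamt1 - ρ • (γt1 - γt) - η • (θt1 - θt)) θt1)
    (hR2 : lamt1 = lamt + ρ • (θt1 - γt1))
    (hR3 : ⟪lamt1, θs - γt1⟫_ℝ ≤ 0) :
    L θt1 - L θs ≤
      (1 / (2 * ρ)) * (‖lamt‖ ^ 2 - ‖lamt1‖ ^ 2)
        - (ρ / 2) * ‖θt1 - γt‖ ^ 2
        + (η / 2) * (‖θt - θs‖ ^ 2 - ‖θt1 - θs‖ ^ 2)
        - (η / 2) * ‖θt1 - θt‖ ^ 2
        + (ρ / 2) * (‖γt - θs‖ ^ 2 - ‖γt1 - θs‖ ^ 2) := by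
  have hfirst := hconv.inner_gradient_sub_le (Set.mem_univ θt1) (Set.mem_univ θs) hgrad
  have hsplit : ⟪-lamt1 - ρ • (γt1 - γt) - η • (θt1 - θt), θs - θt1⟫_ℝ =
      ⟪lamt1, θt1 - γt1⟫_ℝ - ⟪lamt1, θs - γt1⟫_ℝ
        + ρ * (⟪γt1 - γt, θt1 - γt1⟫_ℝ + ⟪γt1 - γt, γt1 - θs⟫_ℝ)
        + η * ⟪θt1 - θt, θt1 - θs⟫_ℝ := by
    simp only [inner_sub_left, inner_sub_right, inner_neg_left, real_inner_smul_left]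
    ring
  have hlam : (1 / (2 * ρ)) * (‖lamt‖ ^ 2 - ‖lamt1‖ ^ 2) =
      -⟪lamt1, θt1 - γt1⟫_ℝ + (ρ / 2) * ‖θt1 - γt1‖ ^ 2 := by
    rw [norm_sq_sub_norm_sq_of_eq_add_smul hR2]
    field_simp
  have hθ := two_mul_real_inner_sub_sub θt1 θt θs
  have hγ := two_mul_real_inner_sub_sub γt1 γt θs
  have hθγ : ‖θt1 - γt‖ ^ 2 =
      ‖θt1 - γt1‖ ^ 2 + 2 * ⟪γt1 - γt, θt1 - γt1⟫_ℝ + ‖γt1 - γt‖ ^ 2 := by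
    rw [real_inner_comm, ← norm_add_sq_real, sub_add_sub_cancel]
  rw [hlam]
  linear_combination hfirst + hR3 - hsplit - (η / 2) * hθ - (ρ / 2) * hγ + (ρ / 2) * hθγ

/-- Lemma 2 of the paper: per-step ADMM inequality. -/
theorem domkl_lemma2
    {H : Type*} [NormedAddCommGroup H] [InnerProductSpace ℝ H] [CompleteSpace H]
    (ρ η : ℝ) (hρ : 0 < ρ) (hη : 0 < η)
    (θt θt1 γt γt1 lamt lamt1 θs : H) (L : H → ℝ)
    (hconv : ConvexOn ℝ Set.univ L)
    (hgrad : HasGradientAt L (-lamt1 - ρ • (γt1 - γt) - η • (θt1 - θt)) θt1)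
    (hR2 : lamt1 = lamt + ρ • (θt1 - γt1))
    (hR3 : ⟪lamt1, θs - γt1⟫_ℝ ≤ 0) :
    L θt1 - L θs ≤
      (1 / (2 * ρ)) * (‖lamt‖ ^ 2 - ‖lamt1‖ ^ 2)
        - (ρ / 2) * ‖θt1 - γt‖ ^ 2
        + (η / 2) * (‖θt - θs‖ ^ 2 - ‖θt1 - θs‖ ^ 2)
        - (η / 2) * ‖θt1 - θt‖ ^ 2
        + (ρ / 2) * (‖γt - θs‖ ^ 2 - ‖γt1 - θs‖ ^ 2) :=
  domkl_lemma2_general ρ η hρ θt θt1 γt γt1 lamt lamt1 θs L hconv hgrad hR2 hR3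
end

section
/- (Theorem 1, learning-accuracy part, non-asymptotic form) Work in a real inner product space H. Fix an integer T ≥ 1 and reals ρ > 0, η > 0, C ≥ 0, G ≥ 0. Let L_1, …, L_T : H → ℝ be loss functions, let θ̂_1, …, θ̂_{T+1}, γ̂_1, …, γ̂_{T+1}, λ̂_1, …, λ̂_{T+1} ∈ H and θ⋆ ∈ H. Assume that for every t ∈ {1, …, T}: L_t is convex and differentiable at both θ̂_t and θ̂_{t+1}, and the per-step relations hold: (R1) ∇L_t(θ̂_{t+1}) = −λ̂_{t+1} − ρ·(γ̂_{t+1} − γ̂_t) − η·(θ̂_{t+1} − θ̂_t); (R2) λ̂_{t+1} = λ̂_t + ρ·(θ̂_{t+1} − γ̂_{t+1}); (R3) ⟨λ̂_{t+1}, θ⋆ − γ̂_{t+1}⟩ ≤ 0; and the gradient bound ‖∇L_t(θ̂_t)‖² ≤ G. Assume further λ̂_1 = 0, ‖γ̂_1 − θ⋆‖² ≤ C, and ‖θ̂_1 − θ⋆‖² ≤ C. Then Σ_{t=1}^{T} (L_t(θ̂_t) − L_t(θ⋆)) ≤ (ρ/2)·C + (η/2)·C + T·G/(2η). -/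
/-!
Each ADMM step decreases the Lyapunov function
`Φ_t = (η/2)‖θ_t - θ⋆‖² + (ρ/2)‖γ_t - θ⋆‖² + ‖λ_t‖²/(2ρ)` up to an additive `G/(2η)`.
Convexity at `θ_{t+1}` bounds `L_t(θ_{t+1}) - L_t(θ⋆)` by `⟪∇L_t(θ_{t+1}), θ_{t+1} - θ⋆⟫`, which by
(R1), (R2) and polarization equals `Φ_t - Φ_{t+1} - (η/2)‖θ_t - θ_{t+1}‖²` minus the slack
`(ρ/2)‖θ_{t+1} - γ_t‖² - ⟪λ_{t+1}, θ⋆ - γ_{t+1}⟫`, which is nonnegative by (R3). Convexity at `θ_t`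
and Young's inequality bound `L_t(θ_t) - L_t(θ_{t+1})` by `G/(2η) + (η/2)‖θ_t - θ_{t+1}‖²`.
Summing over `t` telescopes, and `λ_1 = 0` gives `Φ_1 ≤ (ρ + η) C / 2`.
-/

open scoped InnerProductSpace

open AffineMap Finset

section

variable {H : Type*} [NormedAddCommGroup H]

noncomputable def admmLyapunov (ρ η : ℝ) (θs θ γ lam : H) : ℝ :=
  η / 2 * ‖θ - θs‖ ^ 2 + ρ / 2 * ‖γ - θs‖ ^ 2 + ‖lam‖ ^ 2 / (2 * ρ)

theorem admmLyapunov_nonneg {ρ η : ℝ} (hρ : 0 ≤ ρ) (hη : 0 ≤ η) (θs θ γ lam : H) :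
    0 ≤ admmLyapunov ρ η θs θ γ lam := by
  unfold admmLyapunov
  positivity

variable [InnerProductSpace ℝ H]

theorem ConvexOn.sub_le_inner_of_hasGradientAt [CompleteSpace H] {s : Set H} {f : H → ℝ}
    {g x y : H} (hf : ConvexOn ℝ s f) (hx : x ∈ s) (hy : y ∈ s) (hg : HasGradientAt f g x) :
    f x - f y ≤ ⟪g, x - y⟫_ℝ := by
  have hline : ConvexOn ℝ (lineMap (k := ℝ) x y ⁻¹' s) (f ∘ lineMap (k := ℝ) x y) :=
    hf.comp_affineMap _
  have hderiv : HasDerivAt (f ∘ lineMap (k := ℝ) x y) ⟪g, y - x⟫_ℝ 0 := by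
    have hfx : HasFDerivAt f (InnerProductSpace.toDual ℝ H g) (lineMap x y (0 : ℝ)) := by
      simpa using hg.hasFDerivAt
    simpa using hfx.comp_hasDerivAt (0 : ℝ) hasDerivAt_lineMap
  have hslope := hline.le_slope_of_hasDerivAt (by simpa) (by simpa) one_pos hderiv
  simp only [slope_def_field, Function.comp_apply, lineMap_apply_zero, lineMap_apply_one,
    sub_zero, div_one] at hslope
  rw [← neg_sub y x, inner_neg_right]
  linarith

theorem real_inner_le_norm_sq_div_add {η : ℝ} (hη : 0 < η) (u v : H) :
    ⟪u, v⟫_ℝ ≤ ‖u‖ ^ 2 / (2 * η) + η / 2 * ‖v‖ ^ 2 := by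
  have hyoung := two_mul_le_add_mul_sq (a := ‖u‖) (b := ‖v‖) (inv_pos.mpr hη)
  rw [inv_inv] at hyoung
  have hdiv : ‖u‖ ^ 2 / (2 * η) = η⁻¹ * ‖u‖ ^ 2 / 2 := by field_simp
  linarith [real_inner_le_norm u v]

theorem admmLyapunov_sub_eq {ρ η : ℝ} (hρ : ρ ≠ 0) (θs θ θ' γ γ' lam' : H) :
    admmLyapunov ρ η θs θ γ (lam' - ρ • (θ' - γ')) - admmLyapunov ρ η θs θ' γ' lam' =
      ⟪-lam' - ρ • (γ' - γ) - η • (θ' - θ), θ' - θs⟫_ℝ + η / 2 * ‖θ - θ'‖ ^ 2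
        + ρ / 2 * ‖θ' - γ‖ ^ 2 - ⟪lam', θs - γ'⟫_ℝ := by
  simp only [admmLyapunov, ← real_inner_self_eq_norm_sq, inner_sub_left, inner_sub_right,
    inner_neg_left, real_inner_smul_right, real_inner_comm]
  field_simp
  ring

theorem inner_admm_gradient_add_le_admmLyapunov_sub {ρ η : ℝ} (hρ : 0 < ρ)
    {θs θ θ' γ γ' lam lam' : H} (hR2 : lam' = lam + ρ • (θ' - γ'))
    (hR3 : ⟪lam', θs - γ'⟫_ℝ ≤ 0) :
    ⟪-lam' - ρ • (γ' - γ) - η • (θ' - θ), θ' - θs⟫_ℝ + η / 2 * ‖θ - θ'‖ ^ 2 ≤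
      admmLyapunov ρ η θs θ γ lam - admmLyapunov ρ η θs θ' γ' lam' := by
  have hlam : lam = lam' - ρ • (θ' - γ') := eq_sub_of_add_eq hR2.symm
  rw [hlam, admmLyapunov_sub_eq hρ.ne']
  have : 0 ≤ ρ / 2 * ‖θ' - γ‖ ^ 2 := by positivity
  linarith

theorem admm_step_loss_sub_le [CompleteSpace H] {ρ η : ℝ} (hρ : 0 < ρ) (hη : 0 < η) {f : H → ℝ}
    {θs θ θ' γ γ' lam lam' g : H} (hf : ConvexOn ℝ Set.univ f) (hg : HasGradientAt f g θ)
    (hg' : HasGradientAt f (-lam' - ρ • (γ' - γ) - η • (θ' - θ)) θ')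
    (hR2 : lam' = lam + ρ • (θ' - γ')) (hR3 : ⟪lam', θs - γ'⟫_ℝ ≤ 0) :
    f θ - f θs ≤
      ‖g‖ ^ 2 / (2 * η) + (admmLyapunov ρ η θs θ γ lam - admmLyapunov ρ η θs θ' γ' lam') := by
  have hcur := hf.sub_le_inner_of_hasGradientAt trivial trivial hg (y := θ')
  have hnext := hf.sub_le_inner_of_hasGradientAt trivial trivial hg' (y := θs)
  have hyoung := real_inner_le_norm_sq_div_add hη g (θ - θ')
  have hstep := inner_admm_gradient_add_le_admmLyapunov_sub (η := η) (θ := θ) (γ := γ) hρ hR2 hR3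
  linarith

end

theorem domkl_thm1_accuracy_general
    {H : Type*} [NormedAddCommGroup H] [InnerProductSpace ℝ H] [CompleteSpace H]
    (T : ℕ)
    (ρ η C G : ℝ) (hρ : 0 < ρ) (hη : 0 < η)
    (L : ℕ → H → ℝ) (θ γ' lam g : ℕ → H) (θs : H)
    (hconv : ∀ t ∈ Finset.Icc 1 T, ConvexOn ℝ Set.univ (L t))
    (hgradt : ∀ t ∈ Finset.Icc 1 T, HasGradientAt (L t) (g t) (θ t))
    (hgradt1 : ∀ t ∈ Finset.Icc 1 T,
      HasGradientAt (L t)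
        (-(lam (t + 1)) - ρ • (γ' (t + 1) - γ' t) - η • (θ (t + 1) - θ t)) (θ (t + 1)))
    (hR2 : ∀ t ∈ Finset.Icc 1 T, lam (t + 1) = lam t + ρ • (θ (t + 1) - γ' (t + 1)))
    (hR3 : ∀ t ∈ Finset.Icc 1 T, ⟪lam (t + 1), θs - γ' (t + 1)⟫_ℝ ≤ 0)
    (hgbound : ∀ t ∈ Finset.Icc 1 T, ‖g t‖ ^ 2 ≤ G)
    (hlam1 : lam 1 = 0)
    (hγ1 : ‖γ' 1 - θs‖ ^ 2 ≤ C)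
    (hθ1 : ‖θ 1 - θs‖ ^ 2 ≤ C) :
    ∑ t ∈ Finset.Icc 1 T, (L t (θ t) - L t θs) ≤
      (ρ / 2) * C + (η / 2) * C + (T : ℝ) * G / (2 * η) := by
  set V : ℕ → ℝ := fun t ↦ admmLyapunov ρ η θs (θ t) (γ' t) (lam t)
  have hstep : ∀ t ∈ Icc 1 T, L t (θ t) - L t θs ≤ G / (2 * η) - (V (t + 1) - V t) := by
    intro t ht
    have hloss := admm_step_loss_sub_le hρ hη (hconv t ht) (hgradt t ht) (hgradt1 t ht)
      (hR2 t ht) (hR3 t ht)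
    have hG := div_le_div_of_nonneg_right (hgbound t ht) (by positivity : 0 ≤ 2 * η)
    linarith
  have hV1 : V 1 ≤ ρ / 2 * C + η / 2 * C := by
    simp only [V, admmLyapunov, hlam1, norm_zero]
    rw [zero_pow two_ne_zero, zero_div, add_zero, add_comm]
    gcongr
  have hVT : 0 ≤ V (T + 1) := admmLyapunov_nonneg hρ.le hη.le _ _ _ _
  calc ∑ t ∈ Icc 1 T, (L t (θ t) - L t θs)
      ≤ ∑ t ∈ Icc 1 T, (G / (2 * η) - (V (t + 1) - V t)) := sum_le_sum hstep
    _ = T * G / (2 * η) - (V (T + 1) - V 1) := by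
      rw [sum_sub_distrib, ← Ico_add_one_right_eq_Icc, sum_Ico_sub V (by omega), sum_const,
        Nat.card_Ico, Nat.add_sub_cancel, nsmul_eq_mul, mul_div_assoc]
    _ ≤ ρ / 2 * C + η / 2 * C + T * G / (2 * η) := by linarith

/-- Theorem 1 of the paper, learning-accuracy part, non-asymptotic form. -/
theorem domkl_thm1_accuracy
    {H : Type*} [NormedAddCommGroup H] [InnerProductSpace ℝ H] [CompleteSpace H]
    (T : ℕ) (hT : 1 ≤ T)
    (ρ η C G : ℝ) (hρ : 0 < ρ) (hη : 0 < η) (hC : 0 ≤ C) (hG : 0 ≤ G)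
    (L : ℕ → H → ℝ) (θ γ' lam g : ℕ → H) (θs : H)
    (hconv : ∀ t ∈ Finset.Icc 1 T, ConvexOn ℝ Set.univ (L t))
    (hgradt : ∀ t ∈ Finset.Icc 1 T, HasGradientAt (L t) (g t) (θ t))
    (hgradt1 : ∀ t ∈ Finset.Icc 1 T,
      HasGradientAt (L t)
        (-(lam (t + 1)) - ρ • (γ' (t + 1) - γ' t) - η • (θ (t + 1) - θ t)) (θ (t + 1)))
    (hR2 : ∀ t ∈ Finset.Icc 1 T, lam (t + 1) = lam t + ρ • (θ (t + 1) - γ' (t + 1)))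
    (hR3 : ∀ t ∈ Finset.Icc 1 T, ⟪lam (t + 1), θs - γ' (t + 1)⟫_ℝ ≤ 0)
    (hgbound : ∀ t ∈ Finset.Icc 1 T, ‖g t‖ ^ 2 ≤ G)
    (hlam1 : lam 1 = 0)
    (hγ1 : ‖γ' 1 - θs‖ ^ 2 ≤ C)
    (hθ1 : ‖θ 1 - θs‖ ^ 2 ≤ C) :
    ∑ t ∈ Finset.Icc 1 T, (L t (θ t) - L t θs) ≤
      (ρ / 2) * C + (η / 2) * C + (T : ℝ) * G / (2 * η) :=
  domkl_thm1_accuracy_general T ρ η C G hρ hη L θ γ' lam g θs hconv hgradt hgradt1 hR2 hR3 hgbound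
    hlam1 hγ1 hθ1
end

section
/- (Theorem 1, learning-accuracy part, with parameter choice ρ = η = √T) Work in a real inner product space H. Fix an integer T ≥ 1 and reals C ≥ 0, G ≥ 0, and set ρ = η = √T. Let L_1, …, L_T : H → ℝ, θ̂_1, …, θ̂_{T+1}, γ̂_1, …, γ̂_{T+1}, λ̂_1, …, λ̂_{T+1} ∈ H and θ⋆ ∈ H satisfy, for every t ∈ {1, …, T}: L_t is convex and differentiable at both θ̂_t and θ̂_{t+1}; the per-step relations (R1) ∇L_t(θ̂_{t+1}) = −λ̂_{t+1} − ρ·(γ̂_{t+1} − γ̂_t) − η·(θ̂_{t+1} − θ̂_t), (R2) λ̂_{t+1} = λ̂_t + ρ·(θ̂_{t+1} − γ̂_{t+1}), (R3) ⟨λ̂_{t+1}, θ⋆ − γ̂_{t+1}⟩ ≤ 0; and ‖∇L_t(θ̂_t)‖² ≤ G. Assume λ̂_1 = 0, ‖γ̂_1 − θ⋆‖² ≤ C, and ‖θ̂_1 − θ⋆‖² ≤ C. Then Σ_{t=1}^{T} (L_t(θ̂_t) − L_t(θ⋆)) ≤ ((2·C + G)/2)·√T; in particular the cumulative accuracy regret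 is O(√T). -/
open scoped InnerProductSpace

/-!
The regret is controlled by the potential
`V_t = ‖λ̂_t‖² / (2ρ) + (η/2) ‖θ̂_t - θ⋆‖² + (ρ/2) ‖γ̂_t - θ⋆‖²`.
Convexity of `L_t` at `θ̂_t` and at `θ̂_{t+1}`, with the gradient (R1) at `θ̂_{t+1}`, bounds
`L_t(θ̂_t) - L_t(θ⋆)` by inner products; Young's inequality, the three-point identity and the
multiplier update (R2) together with (R3) turn these into
`‖∇L_t(θ̂_t)‖² / (2η) + V_t - V_{t+1}`.
Summing telescopes to `T G / (2η) + V_1 ≤ (G/2) √T + C √T` for `ρ = η = √T`.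
-/

theorem ConvexOn.add_fderiv_sub_le {E : Type*} [NormedAddCommGroup E] [NormedSpace ℝ E]
    {s : Set E} {f : E → ℝ} {f' : E →L[ℝ] ℝ} {x y : E} (hf : ConvexOn ℝ s f) (hx : x ∈ s)
    (hy : y ∈ s) (hf' : HasFDerivAt f f' x) :
    f x + f' (y - x) ≤ f y := by
  have hφ : HasDerivAt (f ∘ AffineMap.lineMap x y) (f' (y - x)) (0 : ℝ) := by
    rw [← AffineMap.lineMap_apply_zero x y (k := ℝ)] at hf'
    exact hf'.comp_hasDerivAt 0 AffineMap.hasDerivAt_lineMap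
  have hslope := (hf.comp_affineMap (AffineMap.lineMap x y)).le_slope_of_hasDerivAt
    (by simpa using hx) (by simpa using hy) zero_lt_one hφ
  rw [slope_def_field, Function.comp_apply, Function.comp_apply, AffineMap.lineMap_apply_zero,
    AffineMap.lineMap_apply_one, sub_zero, div_one] at hslope
  linarith

section InnerProductSpace

variable {H : Type*} [NormedAddCommGroup H] [InnerProductSpace ℝ H]

theorem ConvexOn.add_inner_sub_le_of_hasGradientAt [CompleteSpace H] {s : Set H} {f : H → ℝ}
    {g x y : H} (hf : ConvexOn ℝ s f) (hx : x ∈ s) (hy : y ∈ s) (hg : HasGradientAt f g x) :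
    f x + ⟪g, y - x⟫_ℝ ≤ f y := by
  simpa using hf.add_fderiv_sub_le hx hy hg.hasFDerivAt

theorem two_mul_inner_sub_sub_eq (a b c : H) :
    2 * ⟪a - b, c - a⟫_ℝ = ‖b - c‖ ^ 2 - ‖a - c‖ ^ 2 - ‖a - b‖ ^ 2 := by
  have h := norm_add_sq_real (a - b) (c - a)
  rw [sub_add_sub_cancel', norm_sub_rev c a, norm_sub_rev c b] at h
  linarith

theorem real_inner_le_young {ε : ℝ} (hε : 0 < ε) (u v : H) :
    ⟪u, v⟫_ℝ ≤ ‖u‖ ^ 2 / (2 * ε) + ε / 2 * ‖v‖ ^ 2 := by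
  have h := norm_sub_sq_real u (ε • v)
  rw [real_inner_smul_right, norm_smul, Real.norm_of_nonneg hε.le] at h
  have hsq : 0 ≤ ‖u - ε • v‖ ^ 2 := sq_nonneg _
  rw [div_add' _ _ _ (by positivity), le_div_iff₀ (by positivity)]
  nlinarith

theorem two_mul_inner_sub_sub_le (a b c d : H) :
    2 * ⟪a - b, c - d⟫_ℝ ≤ ‖b - c‖ ^ 2 - ‖a - c‖ ^ 2 + ‖a - d‖ ^ 2 := by
  have hsplit : c - d = (c - a) + (a - d) := (sub_add_sub_cancel c a d).symm
  have hthree := two_mul_inner_sub_sub_eq a b c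
  have hcross := real_inner_le_young one_pos (a - b) (a - d)
  rw [hsplit, inner_add_right]
  linarith

theorem real_inner_le_of_multiplier_update {ρ : ℝ} (hρ : 0 < ρ) {l₀ l₁ x y z : H}
    (hl : l₁ = l₀ + ρ • (x - z)) (hz : ⟪l₁, y - z⟫_ℝ ≤ 0) :
    ⟪l₁, y - x⟫_ℝ ≤ (‖l₀‖ ^ 2 - ‖l₁‖ ^ 2) / (2 * ρ) - ρ / 2 * ‖x - z‖ ^ 2 := by
  have hsplit : y - x = (y - z) + ρ⁻¹ • (l₀ - l₁) := by
    rw [hl, sub_add_cancel_left, smul_neg, inv_smul_smul₀ hρ.ne']; abel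
  have hthree := two_mul_inner_sub_sub_eq l₁ 0 l₀
  have hincrement : ‖l₁ - l₀‖ = ρ * ‖x - z‖ := by
    rw [hl, add_sub_cancel_left, norm_smul, Real.norm_of_nonneg hρ.le]
  rw [sub_zero, zero_sub, norm_neg, hincrement] at hthree
  rw [hsplit, inner_add_right, real_inner_smul_right]
  field_simp
  nlinarith

noncomputable def doklPotential (ρ η : ℝ) (θs θ γ l : H) : ℝ :=
  ‖l‖ ^ 2 / (2 * ρ) + η / 2 * ‖θ - θs‖ ^ 2 + ρ / 2 * ‖γ - θs‖ ^ 2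

omit [InnerProductSpace ℝ H] in
theorem doklPotential_nonneg {ρ η : ℝ} (hρ : 0 < ρ) (hη : 0 < η) (θs θ γ l : H) :
    0 ≤ doklPotential ρ η θs θ γ l := by
  unfold doklPotential
  positivity

theorem sub_le_sub_doklPotential [CompleteSpace H] {ρ η : ℝ} (hρ : 0 < ρ) (hη : 0 < η)
    {f : H → ℝ} {θs θ₀ θ₁ γ₀ γ₁ l₀ l₁ g : H} (hf : ConvexOn ℝ Set.univ f)
    (hg : HasGradientAt f g θ₀)
    (hg₁ : HasGradientAt f (-l₁ - ρ • (γ₁ - γ₀) - η • (θ₁ - θ₀)) θ₁)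
    (hl : l₁ = l₀ + ρ • (θ₁ - γ₁)) (hl₁ : ⟪l₁, θs - γ₁⟫_ℝ ≤ 0) :
    f θ₀ - f θs ≤
      ‖g‖ ^ 2 / (2 * η) + (doklPotential ρ η θs θ₀ γ₀ l₀ - doklPotential ρ η θs θ₁ γ₁ l₁) := by
  have hconv₀ := hf.add_inner_sub_le_of_hasGradientAt trivial trivial hg (y := θ₁)
  have hconv₁ := hf.add_inner_sub_le_of_hasGradientAt trivial trivial hg₁ (y := θs)
  rw [inner_sub_left, inner_sub_left, inner_neg_left, real_inner_smul_left,
    real_inner_smul_left] at hconv₁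
  have hyoung := real_inner_le_young hη (-g) (θ₁ - θ₀)
  rw [norm_neg, inner_neg_left] at hyoung
  have hθ := two_mul_inner_sub_sub_eq θ₁ θ₀ θs
  have hγ := two_mul_inner_sub_sub_le γ₁ γ₀ θs θ₁
  rw [norm_sub_rev γ₁ θ₁] at hγ
  have hmult := real_inner_le_of_multiplier_update hρ hl hl₁
  unfold doklPotential
  linear_combination hconv₀ + hconv₁ + hyoung + hmult + (ρ / 2) * hγ + (η / 2) * hθ

end InnerProductSpace

theorem sum_Icc_le_of_le_add_sub {T : ℕ} (hT : 1 ≤ T) {a V : ℕ → ℝ} {c : ℝ}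
    (h : ∀ t ∈ Finset.Icc 1 T, a t ≤ c + (V t - V (t + 1))) :
    ∑ t ∈ Finset.Icc 1 T, a t ≤ T * c + (V 1 - V (T + 1)) :=
  calc ∑ t ∈ Finset.Icc 1 T, a t ≤ ∑ t ∈ Finset.Icc 1 T, (c - (V (t + 1) - V t)) :=
        Finset.sum_le_sum fun t ht ↦ by linarith [h t ht]
    _ = T * c + (V 1 - V (T + 1)) := by
        rw [Finset.sum_sub_distrib, Finset.sum_Icc_sub hT, Finset.sum_const, Nat.card_Icc,
          Nat.add_sub_cancel, nsmul_eq_mul]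
        ring

theorem domkl_thm1_accuracy_sqrtT_general
    {H : Type*} [NormedAddCommGroup H] [InnerProductSpace ℝ H] [CompleteSpace H]
    (T : ℕ) (hT : 1 ≤ T)
    (C G : ℝ)
    (ρ η : ℝ) (hρ : ρ = Real.sqrt T) (hη : η = Real.sqrt T)
    (L : ℕ → H → ℝ) (θ γ' lam g : ℕ → H) (θs : H)
    (hconv : ∀ t ∈ Finset.Icc 1 T, ConvexOn ℝ Set.univ (L t))
    (hgradt : ∀ t ∈ Finset.Icc 1 T, HasGradientAt (L t) (g t) (θ t))
    (hgradt1 : ∀ t ∈ Finset.Icc 1 T,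
      HasGradientAt (L t)
        (-(lam (t + 1)) - ρ • (γ' (t + 1) - γ' t) - η • (θ (t + 1) - θ t)) (θ (t + 1)))
    (hR2 : ∀ t ∈ Finset.Icc 1 T, lam (t + 1) = lam t + ρ • (θ (t + 1) - γ' (t + 1)))
    (hR3 : ∀ t ∈ Finset.Icc 1 T, ⟪lam (t + 1), θs - γ' (t + 1)⟫_ℝ ≤ 0)
    (hgbound : ∀ t ∈ Finset.Icc 1 T, ‖g t‖ ^ 2 ≤ G)
    (hlam1 : lam 1 = 0)
    (hγ1 : ‖γ' 1 - θs‖ ^ 2 ≤ C)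
    (hθ1 : ‖θ 1 - θs‖ ^ 2 ≤ C) :
    ∑ t ∈ Finset.Icc 1 T, (L t (θ t) - L t θs) ≤
      ((2 * C + G) / 2) * Real.sqrt T := by
  subst hρ hη
  have hsqrt : 0 < √(T : ℝ) := Real.sqrt_pos.mpr (by exact_mod_cast hT)
  set V : ℕ → ℝ := fun t ↦ doklPotential √T √T θs (θ t) (γ' t) (lam t)
  have hstep : ∀ t ∈ Finset.Icc 1 T,
      L t (θ t) - L t θs ≤ G / (2 * √T) + (V t - V (t + 1)) := fun t ht ↦
    (sub_le_sub_doklPotential hsqrt hsqrt (hconv t ht) (hgradt t ht) (hgradt1 t ht) (hR2 t ht)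
      (hR3 t ht)).trans (by gcongr; exact hgbound t ht)
  have hV₁ : V 1 ≤ √T * C := by
    simp only [V, doklPotential, hlam1, norm_zero, zero_pow two_ne_zero, zero_div, zero_add]
    linarith [mul_le_mul_of_nonneg_left hθ1 hsqrt.le, mul_le_mul_of_nonneg_left hγ1 hsqrt.le]
  have hV_nonneg : 0 ≤ V (T + 1) := doklPotential_nonneg hsqrt hsqrt _ _ _ _
  calc ∑ t ∈ Finset.Icc 1 T, (L t (θ t) - L t θs)
      ≤ T * (G / (2 * √T)) + (V 1 - V (T + 1)) := sum_Icc_le_of_le_add_sub hT hstep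
    _ ≤ T / √T * (G / 2) + √T * C := by
        rw [div_mul_div_comm, mul_div_assoc, mul_comm (√(T : ℝ)) 2]
        linarith
    _ = ((2 * C + G) / 2) * Real.sqrt T := by rw [Real.div_sqrt]; ring

/-- Theorem 1 of the paper, learning-accuracy part, with parameter choice ρ = η = √T. -/
theorem domkl_thm1_accuracy_sqrtT
    {H : Type*} [NormedAddCommGroup H] [InnerProductSpace ℝ H] [CompleteSpace H]
    (T : ℕ) (hT : 1 ≤ T)
    (C G : ℝ) (hC : 0 ≤ C) (hG : 0 ≤ G)
    (ρ η : ℝ) (hρ : ρ = Real.sqrt T) (hη : η = Real.sqrt T)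
    (L : ℕ → H → ℝ) (θ γ' lam g : ℕ → H) (θs : H)
    (hconv : ∀ t ∈ Finset.Icc 1 T, ConvexOn ℝ Set.univ (L t))
    (hgradt : ∀ t ∈ Finset.Icc 1 T, HasGradientAt (L t) (g t) (θ t))
    (hgradt1 : ∀ t ∈ Finset.Icc 1 T,
      HasGradientAt (L t)
        (-(lam (t + 1)) - ρ • (γ' (t + 1) - γ' t) - η • (θ (t + 1) - θ t)) (θ (t + 1)))
    (hR2 : ∀ t ∈ Finset.Icc 1 T, lam (t + 1) = lam t + ρ • (θ (t + 1) - γ' (t + 1)))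
    (hR3 : ∀ t ∈ Finset.Icc 1 T, ⟪lam (t + 1), θs - γ' (t + 1)⟫_ℝ ≤ 0)
    (hgbound : ∀ t ∈ Finset.Icc 1 T, ‖g t‖ ^ 2 ≤ G)
    (hlam1 : lam 1 = 0)
    (hγ1 : ‖γ' 1 - θs‖ ^ 2 ≤ C)
    (hθ1 : ‖θ 1 - θs‖ ^ 2 ≤ C) :
    ∑ t ∈ Finset.Icc 1 T, (L t (θ t) - L t θs) ≤
      ((2 * C + G) / 2) * Real.sqrt T :=
  domkl_thm1_accuracy_sqrtT_general T hT C G ρ η hρ hη L θ γ' lam g θs hconv hgradt hgradt1 hR2 hR3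
    hgbound hlam1 hγ1 hθ1
end

section
/- (Theorem 1, consensus-violation part, non-asymptotic form) Work in a real inner product space H. Fix an integer T ≥ 1 and reals ρ > 0, η > 0, C ≥ 0, B ≥ 0. Let L_1, …, L_T : H → ℝ, θ̂_1, …, θ̂_{T+1}, γ̂_1, …, γ̂_{T+1}, λ̂_1, …, λ̂_{T+1} ∈ H and θ⋆ ∈ H satisfy, for every t ∈ {1, …, T}: L_t is convex and differentiable at θ̂_{t+1}; the per-step relations (R1) ∇L_t(θ̂_{t+1}) = −λ̂_{t+1} − ρ·(γ̂_{t+1} − γ̂_t) − η·(θ̂_{t+1} − θ̂_t), (R2) λ̂_{t+1} = λ̂_t + ρ·(θ̂_{t+1} − γ̂_{t+1}), (R3) ⟨λ̂_{t+1}, θ⋆ − γ̂_{t+1}⟩ ≤ 0; and the lower bound L_t(θ̂_{t+1}) − L_t(θ⋆) ≥ −B. Assume λ̂_1 = 0, ‖γ̂_1 − θ⋆‖² ≤ C, and ‖θ̂_1 − θ⋆‖² ≤ C. Then Σ_{t=1}^{T} ‖θ̂_{t+1} − γ̂_t‖² ≤ 2·B·T/ρ + C + (η/ρ)·C. -/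
/-!
The potential `Φ_t = ‖λ_t‖² / (2ρ) + ρ/2 ‖γ_t - θ⋆‖² + η/2 ‖θ_t - θ⋆‖²` decreases along the
iteration up to the excess loss. Pairing the gradient (R1) with `θ⋆ - θ_{t+1}` through first-order
convexity, substituting (R2) and expanding squares gives the exact identity
`⟪∇L_t, θ⋆ - θ_{t+1}⟫ + Φ_t - Φ_{t+1}
  = ρ/2 ‖θ_{t+1} - γ_t‖² + η/2 ‖θ_{t+1} - θ_t‖² - ⟪λ_{t+1}, θ⋆ - γ_{t+1}⟫`,
whose last two terms are nonnegative by (R3). Hence `ρ/2 ‖θ_{t+1} - γ_t‖² ≤ B + Φ_t - Φ_{t+1}`;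
telescoping and `Φ_1 ≤ (ρ + η) C / 2` (as `λ_1 = 0`) give the bound.
-/

open scoped InnerProductSpace

theorem ConvexOn.le_sub_of_hasFDerivAt {E : Type*} [NormedAddCommGroup E] [NormedSpace ℝ E]
    {s : Set E} {f : E → ℝ} {f' : E →L[ℝ] ℝ} {x y : E} (hf : ConvexOn ℝ s f) (hx : x ∈ s)
    (hy : y ∈ s) (hf' : HasFDerivAt f f' x) : f' (y - x) ≤ f y - f x := by
  set ℓ : ℝ →ᵃ[ℝ] E := AffineMap.lineMap x y
  have hline : HasDerivAt (f ∘ ℓ) (f' (y - x)) 0 := by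
    rw [← AffineMap.lineMap_apply_zero (k := ℝ) x y] at hf'
    exact hf'.comp_hasDerivAt 0 AffineMap.hasDerivAt_lineMap
  have := (hf.comp_affineMap ℓ).le_slope_of_hasDerivAt
    (by simpa [ℓ] using hx) (by simpa [ℓ] using hy) zero_lt_one hline
  simpa [ℓ, slope_def_field] using this

theorem ConvexOn.inner_le_sub_of_hasGradientAt {H : Type*} [NormedAddCommGroup H]
    [InnerProductSpace ℝ H] [CompleteSpace H] {s : Set H} {f : H → ℝ} {g x y : H}
    (hf : ConvexOn ℝ s f) (hx : x ∈ s) (hy : y ∈ s) (hg : HasGradientAt f g x) :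
    ⟪g, y - x⟫_ℝ ≤ f y - f x := by
  simpa using hf.le_sub_of_hasFDerivAt hx hy hg.hasFDerivAt

section
variable {H : Type*} [NormedAddCommGroup H]

noncomputable def admmPotential (ρ η : ℝ) (θs l γ θ : H) : ℝ :=
  ‖l‖ ^ 2 / (2 * ρ) + ρ / 2 * ‖γ - θs‖ ^ 2 + η / 2 * ‖θ - θs‖ ^ 2

theorem admmPotential_nonneg {ρ η : ℝ} (hρ : 0 ≤ ρ) (hη : 0 ≤ η) (θs l γ θ : H) :
    0 ≤ admmPotential ρ η θs l γ θ := by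
  unfold admmPotential
  positivity

variable [InnerProductSpace ℝ H]

theorem inner_add_admmPotential_sub_eq {ρ η : ℝ} {θs l l' γ γ' θ θ' : H} (hρ : ρ ≠ 0)
    (hl : l' = l + ρ • (θ' - γ')) :
    ⟪-l' - ρ • (γ' - γ) - η • (θ' - θ), θs - θ'⟫_ℝ
        + (admmPotential ρ η θs l γ θ - admmPotential ρ η θs l' γ' θ') =
      ρ / 2 * ‖θ' - γ‖ ^ 2 + η / 2 * ‖θ' - θ‖ ^ 2 - ⟪l', θs - γ'⟫_ℝ := by
  subst hl
  simp only [admmPotential, ← real_inner_self_eq_norm_sq, inner_sub_left, inner_sub_right,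
    inner_add_left, inner_add_right, inner_neg_left, real_inner_smul_right, real_inner_comm]
  field_simp
  ring

theorem admmPotential_step {ρ η : ℝ} {f : H → ℝ} {θs l l' γ γ' θ θ' : H} [CompleteSpace H]
    (hρ : 0 < ρ) (hη : 0 ≤ η) (hf : ConvexOn ℝ Set.univ f)
    (hgrad : HasGradientAt f (-l' - ρ • (γ' - γ) - η • (θ' - θ)) θ')
    (hl : l' = l + ρ • (θ' - γ')) (hl' : ⟪l', θs - γ'⟫_ℝ ≤ 0) :
    ρ / 2 * ‖θ' - γ‖ ^ 2 ≤
      f θs - f θ' + (admmPotential ρ η θs l γ θ - admmPotential ρ η θs l' γ' θ') := by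
  have hconv := hf.inner_le_sub_of_hasGradientAt (Set.mem_univ _) (Set.mem_univ θs) hgrad
  have hid := inner_add_admmPotential_sub_eq (θs := θs) (γ := γ) (θ := θ) (η := η) hρ.ne' hl
  nlinarith [sq_nonneg ‖θ' - θ‖]

end

theorem Finset.sum_Icc_le_of_le_add_sub_succ {a Φ : ℕ → ℝ} {b : ℝ} {T : ℕ}
    (h : ∀ t ∈ Finset.Icc 1 T, a t ≤ b + (Φ t - Φ (t + 1))) (hΦ : 0 ≤ Φ (T + 1)) :
    ∑ t ∈ Finset.Icc 1 T, a t ≤ T * b + Φ 1 := by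
  have htel : ∑ t ∈ Finset.Icc 1 T, (Φ t - Φ (t + 1)) = Φ 1 - Φ (T + 1) := by
    rw [← Finset.Ico_add_one_right_eq_Icc, ← neg_sub,
      ← Finset.sum_Ico_sub (f := Φ) (by omega : 1 ≤ T + 1), ← Finset.sum_neg_distrib]
    simp only [neg_sub]
  calc ∑ t ∈ Finset.Icc 1 T, a t ≤ ∑ t ∈ Finset.Icc 1 T, (b + (Φ t - Φ (t + 1))) :=
        Finset.sum_le_sum h
    _ = T * b + (Φ 1 - Φ (T + 1)) := by
        rw [Finset.sum_add_distrib, htel, Finset.sum_const, Nat.card_Icc, nsmul_eq_mul]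
        simp
    _ ≤ T * b + Φ 1 := by linarith

theorem domkl_thm1_consensus_general
    {H : Type*} [NormedAddCommGroup H] [InnerProductSpace ℝ H] [CompleteSpace H]
    (T : ℕ)
    (ρ η C B : ℝ) (hρ : 0 < ρ) (hη : 0 < η)
    (L : ℕ → H → ℝ) (θ γ' lam : ℕ → H) (θs : H)
    (hconv : ∀ t ∈ Finset.Icc 1 T, ConvexOn ℝ Set.univ (L t))
    (hgradt1 : ∀ t ∈ Finset.Icc 1 T,
      HasGradientAt (L t)
        (-(lam (t + 1)) - ρ • (γ' (t + 1) - γ' t) - η • (θ (t + 1) - θ t)) (θ (t + 1)))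
    (hR2 : ∀ t ∈ Finset.Icc 1 T, lam (t + 1) = lam t + ρ • (θ (t + 1) - γ' (t + 1)))
    (hR3 : ∀ t ∈ Finset.Icc 1 T, ⟪lam (t + 1), θs - γ' (t + 1)⟫_ℝ ≤ 0)
    (hBlow : ∀ t ∈ Finset.Icc 1 T, L t (θ (t + 1)) - L t θs ≥ -B)
    (hlam1 : lam 1 = 0)
    (hγ1 : ‖γ' 1 - θs‖ ^ 2 ≤ C)
    (hθ1 : ‖θ 1 - θs‖ ^ 2 ≤ C) :
    ∑ t ∈ Finset.Icc 1 T, ‖θ (t + 1) - γ' t‖ ^ 2 ≤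
      2 * B * (T : ℝ) / ρ + C + (η / ρ) * C := by
  set Φ : ℕ → ℝ := fun t ↦ admmPotential ρ η θs (lam t) (γ' t) (θ t)
  have hstep : ∀ t ∈ Finset.Icc 1 T,
      ρ / 2 * ‖θ (t + 1) - γ' t‖ ^ 2 ≤ B + (Φ t - Φ (t + 1)) := fun t ht ↦ by
    have := admmPotential_step hρ hη.le (hconv t ht) (hgradt1 t ht) (hR2 t ht) (hR3 t ht)
    linarith [hBlow t ht]
  have hΦ1 : Φ 1 ≤ ρ / 2 * C + η / 2 * C := by
    simp only [Φ, admmPotential, hlam1, norm_zero, ne_eq, OfNat.ofNat_ne_zero,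
      not_false_eq_true, zero_pow, zero_div, zero_add]
    gcongr
  have hsum := Finset.sum_Icc_le_of_le_add_sub_succ hstep
    (admmPotential_nonneg hρ.le hη.le _ _ _ _)
  rw [← Finset.mul_sum] at hsum
  calc ∑ t ∈ Finset.Icc 1 T, ‖θ (t + 1) - γ' t‖ ^ 2
      = 2 / ρ * (ρ / 2 * ∑ t ∈ Finset.Icc 1 T, ‖θ (t + 1) - γ' t‖ ^ 2) := by field_simp
    _ ≤ 2 / ρ * (T * B + (ρ / 2 * C + η / 2 * C)) := by gcongr; linarith
    _ = 2 * B * (T : ℝ) / ρ + C + (η / ρ) * C := by field_simp; ring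

/-- Theorem 1 of the paper, consensus-violation part, non-asymptotic form. -/
theorem domkl_thm1_consensus
    {H : Type*} [NormedAddCommGroup H] [InnerProductSpace ℝ H] [CompleteSpace H]
    (T : ℕ) (hT : 1 ≤ T)
    (ρ η C B : ℝ) (hρ : 0 < ρ) (hη : 0 < η) (hC : 0 ≤ C) (hB : 0 ≤ B)
    (L : ℕ → H → ℝ) (θ γ' lam : ℕ → H) (θs : H)
    (hconv : ∀ t ∈ Finset.Icc 1 T, ConvexOn ℝ Set.univ (L t))
    (hgradt1 : ∀ t ∈ Finset.Icc 1 T,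
      HasGradientAt (L t)
        (-(lam (t + 1)) - ρ • (γ' (t + 1) - γ' t) - η • (θ (t + 1) - θ t)) (θ (t + 1)))
    (hR2 : ∀ t ∈ Finset.Icc 1 T, lam (t + 1) = lam t + ρ • (θ (t + 1) - γ' (t + 1)))
    (hR3 : ∀ t ∈ Finset.Icc 1 T, ⟪lam (t + 1), θs - γ' (t + 1)⟫_ℝ ≤ 0)
    (hBlow : ∀ t ∈ Finset.Icc 1 T, L t (θ (t + 1)) - L t θs ≥ -B)
    (hlam1 : lam 1 = 0)
    (hγ1 : ‖γ' 1 - θs‖ ^ 2 ≤ C)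
    (hθ1 : ‖θ 1 - θs‖ ^ 2 ≤ C) :
    ∑ t ∈ Finset.Icc 1 T, ‖θ (t + 1) - γ' t‖ ^ 2 ≤
      2 * B * (T : ℝ) / ρ + C + (η / ρ) * C :=
  domkl_thm1_consensus_general T ρ η C B hρ hη L θ γ' lam θs hconv hgradt1 hR2 hR3 hBlow hlam1 hγ1
    hθ1
end

section
/- (Hedge/exponential-weights regret bound) Fix integers T ≥ 1 and P ≥ 1 and reals η > 0 and B ≥ 0. Let ℓ(t,p) ∈ ℝ for t = 1,…,T and p = 1,…,P satisfy 0 ≤ ℓ(t,p) ≤ B. Define the Hedge weights w(t,p) = exp(−(1/η)·Σ_{τ=1}^{t−1} ℓ(τ,p)) (so w(1,p) = 1) and q(t,p) = w(t,p) / Σ_{p'=1}^{P} w(t,p'). Then Σ_{t=1}^{T} Σ_{p=1}^{P} q(t,p)·ℓ(t,p) − min_{1≤p≤P} Σ_{t=1}^{T} ℓ(t,p) ≤ T·B²/(8η) + η·log P. -/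
/-!
The potential `Φ t = log ∑ p, w t p` starts at `Φ 1 = log P` and dominates
`-(1/η) · min_p ∑ t, ℓ t p` at time `T + 1`. Since `w (t+1) p = w t p · exp (-(1/η) ℓ t p)`, the
increment `Φ (t+1) - Φ t` is the log-moment generating function at `-1/η` of the loss `ℓ t ·` under
`q t ·`, which Hoeffding's lemma bounds by `-(1/η) ∑ p, q t p ℓ t p + B² / (8 η²)`. Telescoping over
the `T` rounds and multiplying by `η` gives the regret bound.
-/

open Real MeasureTheory ProbabilityTheory Finset

lemma integral_finsetSum_smul_dirac {ι : Type*} [MeasurableSpace ι] [DiscreteMeasurableSpace ι]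
    (s : Finset ι) (q : ι → ℝ) (hq : ∀ i ∈ s, 0 ≤ q i) (f : ι → ℝ) :
    ∫ i, f i ∂(∑ i ∈ s, ENNReal.ofReal (q i) • Measure.dirac i) = ∑ i ∈ s, q i * f i := by
  rw [integral_finsetSum_measure]
  · refine sum_congr rfl fun i hi => ?_
    rw [integral_smul_measure, integral_dirac, ENNReal.toReal_ofReal (hq i hi), smul_eq_mul]
  · exact fun i _ => (integrable_dirac (by simp)).smul_measure ENNReal.ofReal_ne_top

lemma sum_mul_exp_le_of_mem_Icc {ι : Type*} (s : Finset ι) (q x : ι → ℝ) {a b : ℝ}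
    (hq : ∀ i ∈ s, 0 ≤ q i) (hq₁ : ∑ i ∈ s, q i = 1) (hx : ∀ i ∈ s, x i ∈ Set.Icc a b) (t : ℝ) :
    ∑ i ∈ s, q i * exp (t * x i) ≤
      exp (t * ∑ i ∈ s, q i * x i + t ^ 2 * (b - a) ^ 2 / 8) := by
  let _ : MeasurableSpace ι := ⊤
  set μ : Measure ι := ∑ i ∈ s, ENNReal.ofReal (q i) • Measure.dirac i
  have hμ : IsProbabilityMeasure μ := ⟨by
    simp [μ, ← ENNReal.ofReal_sum_of_nonneg hq, hq₁]⟩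
  have hμs : ∀ᵐ i ∂μ, i ∈ s := by
    rw [ae_iff]
    simp +contextual [μ]
  have hmgf := (hasSubgaussianMGF_of_mem_Icc (μ := μ) Measurable.of_discrete.aemeasurable
    (hμs.mono hx)).mgf_le t
  simp only [mgf, μ, integral_finsetSum_smul_dirac s q hq] at hmgf
  set m := ∑ i ∈ s, q i * x i
  calc ∑ i ∈ s, q i * exp (t * x i) = exp (t * m) * ∑ i ∈ s, q i * exp (t * (x i - m)) := by
        rw [mul_sum]; refine sum_congr rfl fun i _ => ?_
        rw [mul_left_comm, ← exp_add]; ring_nf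
    _ ≤ exp (t * m) * exp (t ^ 2 * (b - a) ^ 2 / 8) := by
        gcongr
        refine hmgf.trans_eq (congrArg exp ?_)
        push_cast
        rw [norm_eq_abs, div_pow, sq_abs]
        ring
    _ = _ := (exp_add _ _).symm

lemma log_sum_mul_exp_le_of_mem_Icc {ι : Type*} {s : Finset ι} (hs : s.Nonempty) {v x : ι → ℝ}
    {a b : ℝ} (hv : ∀ i ∈ s, 0 < v i) (hx : ∀ i ∈ s, x i ∈ Set.Icc a b) (t : ℝ) :
    log (∑ i ∈ s, v i * exp (t * x i)) ≤
      log (∑ i ∈ s, v i) + t * ∑ i ∈ s, v i / (∑ j ∈ s, v j) * x i + t ^ 2 * (b - a) ^ 2 / 8 := by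
  set V := ∑ j ∈ s, v j
  have hV : 0 < V := sum_pos hv hs
  have hq₁ : ∑ i ∈ s, v i / V = 1 := by rw [← sum_div, div_self hV.ne']
  have hsum : ∑ i ∈ s, v i * exp (t * x i) = V * ∑ i ∈ s, v i / V * exp (t * x i) := by
    rw [mul_sum]; exact sum_congr rfl fun i _ => by field_simp
  have hpos : 0 < ∑ i ∈ s, v i / V * exp (t * x i) :=
    sum_pos (fun i hi => by have := hv i hi; positivity) hs
  rw [hsum, log_mul hV.ne' hpos.ne', add_assoc, add_le_add_iff_left, log_le_iff_le_exp hpos]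
  exact sum_mul_exp_le_of_mem_Icc s _ x (fun i hi => (div_pos (hv i hi) hV).le) hq₁ hx t

lemma hedge_weight_succ {ι : Type*} {η : ℝ} {ℓ w : ℕ → ι → ℝ}
    (hw : ∀ t p, w t p = exp (-(1 / η) * ∑ τ ∈ Icc 1 (t - 1), ℓ τ p)) {t : ℕ} (ht : 1 ≤ t) (p : ι) :
    w (t + 1) p = w t p * exp (-(1 / η) * ℓ t p) := by
  obtain ⟨k, rfl⟩ := Nat.exists_eq_add_of_le' ht
  rw [hw, hw, ← exp_add, Nat.add_sub_cancel, Nat.add_sub_cancel, sum_Icc_succ_top (by omega),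
    mul_add]

theorem hedge_regret_bound_general
    (T P : ℕ) (hT : 1 ≤ T) (hP : 1 ≤ P)
    (η B : ℝ) (hη : 0 < η)
    (ℓ : ℕ → ℕ → ℝ)
    (hbound : ∀ t ∈ Finset.Icc 1 T, ∀ p ∈ Finset.Icc 1 P, 0 ≤ ℓ t p ∧ ℓ t p ≤ B)
    (w q : ℕ → ℕ → ℝ)
    (hw : ∀ t p, w t p = Real.exp (-(1 / η) * ∑ τ ∈ Finset.Icc 1 (t - 1), ℓ τ p))
    (hq : ∀ t p, q t p = w t p / ∑ p' ∈ Finset.Icc 1 P, w t p') :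
    (∑ t ∈ Finset.Icc 1 T, ∑ p ∈ Finset.Icc 1 P, q t p * ℓ t p)
      - ((Finset.Icc 1 P).inf' (Finset.nonempty_Icc.mpr hP)
          fun p => ∑ t ∈ Finset.Icc 1 T, ℓ t p) ≤
      (T : ℝ) * B ^ 2 / (8 * η) + η * Real.log P := by
  have hPne := Finset.nonempty_Icc.mpr hP
  set Φ : ℕ → ℝ := fun t => log (∑ p ∈ Icc 1 P, w t p)
  have hwpos : ∀ t p, 0 < w t p := fun t p => hw t p ▸ exp_pos _
  have hΦ₁ : Φ 1 = log P := by simp [Φ, hw]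
  have hΦ_succ : ∀ t ∈ Icc 1 T,
      Φ (t + 1) - Φ t ≤ -(1 / η) * ∑ p ∈ Icc 1 P, q t p * ℓ t p + (-(1 / η)) ^ 2 * B ^ 2 / 8 := by
    intro t ht
    have := log_sum_mul_exp_le_of_mem_Icc hPne (fun p _ => hwpos t p)
      (fun p hp => hbound t ht p hp) (-(1 / η))
    simp only [Φ, hedge_weight_succ hw (mem_Icc.1 ht).1, hq, sub_zero] at this ⊢
    linarith
  obtain ⟨p, hp, hp_min⟩ := exists_mem_eq_inf' hPne fun p => ∑ t ∈ Icc 1 T, ℓ t p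
  have hΦ_last : -(1 / η) * ∑ t ∈ Icc 1 T, ℓ t p ≤ Φ (T + 1) := by
    rw [← log_exp (_ * _), ← Nat.add_sub_cancel T 1, ← hw]
    exact log_le_log (hwpos _ _) (single_le_sum (fun p _ => (hwpos _ p).le) hp)
  have htele := sum_le_sum hΦ_succ
  rw [sum_Icc_sub hT, sum_add_distrib, ← mul_sum, sum_const, Nat.card_Icc, Nat.add_sub_cancel,
    nsmul_eq_mul, hΦ₁] at htele
  rw [hp_min, ← mul_le_mul_iff_of_pos_left (inv_pos.2 hη)]
  calc η⁻¹ * (_ - _)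
        = -(1 / η) * ∑ t ∈ Icc 1 T, ℓ t p
          - -(1 / η) * ∑ t ∈ Icc 1 T, ∑ p ∈ Icc 1 P, q t p * ℓ t p := by ring
    _ ≤ log P + T * ((-(1 / η)) ^ 2 * B ^ 2 / 8) := by linarith
    _ = _ := by field_simp; ring

/-- Hedge/exponential-weights regret bound. -/
theorem hedge_regret_bound
    (T P : ℕ) (hT : 1 ≤ T) (hP : 1 ≤ P)
    (η B : ℝ) (hη : 0 < η) (hB : 0 ≤ B)
    (ℓ : ℕ → ℕ → ℝ)
    (hbound : ∀ t ∈ Finset.Icc 1 T, ∀ p ∈ Finset.Icc 1 P, 0 ≤ ℓ t p ∧ ℓ t p ≤ B)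
    (w q : ℕ → ℕ → ℝ)
    (hw : ∀ t p, w t p = Real.exp (-(1 / η) * ∑ τ ∈ Finset.Icc 1 (t - 1), ℓ τ p))
    (hq : ∀ t p, q t p = w t p / ∑ p' ∈ Finset.Icc 1 P, w t p') :
    (∑ t ∈ Finset.Icc 1 T, ∑ p ∈ Finset.Icc 1 P, q t p * ℓ t p)
      - ((Finset.Icc 1 P).inf' (Finset.nonempty_Icc.mpr hP)
          fun p => ∑ t ∈ Finset.Icc 1 T, ℓ t p) ≤
      (T : ℝ) * B ^ 2 / (8 * η) + η * Real.log P :=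
  hedge_regret_bound_general T P hT hP η B hη ℓ hbound w q hw hq
end

section
/- (Theorem 2, learning-accuracy part, non-asymptotic combined form) Fix integers T ≥ 1 and P ≥ 1 and reals η > 0, B ≥ 0, and R ∈ ℝ. Let y(t) ∈ ℝ, a(t,p) ∈ ℝ, and benchmark losses ℓ⋆(t,p) ∈ ℝ for t = 1,…,T, p = 1,…,P, and let L : ℝ × ℝ → ℝ be such that for every y ∈ ℝ the map u ↦ L(u, y) is convex. Set ℓ(t,p) = L(a(t,p), y(t)) and assume 0 ≤ ℓ(t,p) ≤ B for all t, p, and assume the per-kernel regret bound Σ_{t=1}^{T} ℓ(t,p) ≤ Σ_{t=1}^{T} ℓ⋆(t,p) + R for every p. Define the Hedge weights w(t,p) = exp(−(1/η)·Σ_{τ=1}^{t−1} ℓ(τ,p)) (so w(1,p) = 1) and q(t,p) = w(t,p) / Σ_{p'=1}^{P} w(t,p'). Then Σ_{t=1}^{T} L(Σ_{p=1}^{P} q(t,p)·a(t,p), y(t)) − min_{1≤p≤P} Σ_{t=1}^{T} ℓ⋆(t,p) ≤ R + T·B²/(8η) + η·log P. -/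
/-!
Exponential weights with potential `Φ t = ∑ p, w t p`: by Hoeffding's lemma applied to the
distribution `q t` on the kernels, each round multiplies `Φ` by at most
`exp (-(mean loss of q t) / η + B² / (8 η²))`, while `Φ (T + 1)` dominates the weight
`exp (-(cumulative loss of p) / η)` of any single kernel and `Φ 1 = P`. Taking logarithms
gives the Hedge regret bound `η log P + T B² / (8 η)` against every kernel; Jensen's inequality
for the convex loss bounds the loss of the combined prediction by the mean loss, and the
per-kernel regret bound adds `R`.
-/

open MeasureTheory ProbabilityTheory Real Finset

theorem sum_mul_exp_le_exp_of_mem_Icc {ι : Type*} (s : Finset ι) {q X : ι → ℝ} {a b : ℝ}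
    (hq0 : ∀ i ∈ s, 0 ≤ q i) (hq1 : ∑ i ∈ s, q i = 1)
    (hX : ∀ i ∈ s, X i ∈ Set.Icc a b) (t : ℝ) :
    ∑ i ∈ s, q i * exp (t * X i) ≤
      exp (t * ∑ i ∈ s, q i * X i + t ^ 2 * (b - a) ^ 2 / 8) := by
  -- Hoeffding's lemma for the law `∑ i ∈ s, q i • dirac i` on the discrete space `ι`.
  let _ : MeasurableSpace ι := ⊤
  set μ : Measure ι := ∑ i ∈ s, ENNReal.ofReal (q i) • Measure.dirac i
  have integral_eq (f : ι → ℝ) : ∫ i, f i ∂μ = ∑ i ∈ s, q i * f i := by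
    rw [integral_finsetSum_measure fun i _ =>
      (integrable_dirac enorm_lt_top).smul_measure ENNReal.ofReal_ne_top]
    refine sum_congr rfl fun i hi => ?_
    rw [integral_smul_measure, integral_dirac, ENNReal.toReal_ofReal (hq0 i hi), smul_eq_mul]
  have : IsProbabilityMeasure μ := by
    constructor
    simp only [μ, Measure.coe_finsetSum, Finset.sum_apply, Measure.smul_apply,
      measure_univ, smul_eq_mul, mul_one]
    rw [← ENNReal.ofReal_sum_of_nonneg hq0, hq1, ENNReal.ofReal_one]
  have hae : ∀ᵐ i ∂μ, X i ∈ Set.Icc a b := ae_finsetSum_measure_iff.2 fun i hi =>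
    Measure.ae_smul_measure
      ((ae_dirac_iff (p := (X · ∈ Set.Icc a b)) MeasurableSpace.measurableSet_top).2 (hX i hi)) _
  have hoeffding := (hasSubgaussianMGF_of_mem_Icc measurable_from_top.aemeasurable hae).mgf_le t
  simp only [mgf, integral_eq] at hoeffding
  set m := ∑ i ∈ s, q i * X i
  calc ∑ i ∈ s, q i * exp (t * X i)
      = (∑ i ∈ s, q i * exp (t * (X i - m))) * exp (t * m) := by
        rw [sum_mul]
        refine sum_congr rfl fun i _ => ?_
        rw [mul_assoc, ← exp_add]
        ring_nf
    _ ≤ exp (((‖b - a‖₊ / 2) ^ 2 : NNReal) * t ^ 2 / 2) * exp (t * m) := by gcongr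
    _ = _ := by
        rw [← exp_add, NNReal.coe_pow, NNReal.coe_div, coe_nnnorm, norm_eq_abs, NNReal.coe_ofNat,
          div_pow, sq_abs]
        ring_nf

theorem le_mul_exp_sum_of_le_mul_exp {f E : ℕ → ℝ} {T : ℕ}
    (h : ∀ t ∈ Icc 1 T, f (t + 1) ≤ f t * exp (E t)) :
    f (T + 1) ≤ f 1 * exp (∑ t ∈ Icc 1 T, E t) := by
  induction T with
  | zero => simp
  | succ T ih =>
    calc f (T + 1 + 1) ≤ f (T + 1) * exp (E (T + 1)) := h _ (by simp)
      _ ≤ f 1 * exp (∑ t ∈ Icc 1 T, E t) * exp (E (T + 1)) := by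
        gcongr
        exact ih fun t ht => h t (Icc_subset_Icc_right T.le_succ ht)
      _ = f 1 * exp (∑ t ∈ Icc 1 (T + 1), E t) := by
        rw [sum_Icc_succ_top (by omega), exp_add, mul_assoc]

section Hedge

variable {ι : Type*} (η : ℝ) (ℓ : ℕ → ι → ℝ)

noncomputable def hedgeWeight (t : ℕ) (p : ι) : ℝ :=
  exp (-(1 / η) * ∑ τ ∈ Icc 1 (t - 1), ℓ τ p)

noncomputable def hedgeProb (s : Finset ι) (t : ℕ) (p : ι) : ℝ :=
  hedgeWeight η ℓ t p / ∑ p' ∈ s, hedgeWeight η ℓ t p'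

theorem hedgeWeight_pos (t : ℕ) (p : ι) : 0 < hedgeWeight η ℓ t p := exp_pos _

@[simp]
theorem hedgeWeight_one (p : ι) : hedgeWeight η ℓ 1 p = 1 := by simp [hedgeWeight]

theorem hedgeWeight_succ {t : ℕ} (ht : 1 ≤ t) (p : ι) :
    hedgeWeight η ℓ (t + 1) p = hedgeWeight η ℓ t p * exp (-(1 / η) * ℓ t p) := by
  obtain ⟨t, rfl⟩ := Nat.exists_eq_add_of_le' ht
  rw [hedgeWeight, hedgeWeight, ← exp_add, Nat.add_sub_cancel, sum_Icc_succ_top (by omega),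
    mul_add, Nat.add_sub_cancel]

theorem hedgeProb_nonneg (s : Finset ι) (t : ℕ) (p : ι) : 0 ≤ hedgeProb η ℓ s t p :=
  div_nonneg (hedgeWeight_pos η ℓ t p).le
    (sum_nonneg fun p' _ => (hedgeWeight_pos η ℓ t p').le)

theorem sum_hedgeProb {s : Finset ι} (hs : s.Nonempty) (t : ℕ) :
    ∑ p ∈ s, hedgeProb η ℓ s t p = 1 := by
  simp_rw [hedgeProb]
  rw [← sum_div, div_self (sum_pos (fun p _ => hedgeWeight_pos η ℓ t p) hs).ne']

theorem sum_hedgeWeight_succ_le {s : Finset ι} (hs : s.Nonempty) {t : ℕ} (ht : 1 ≤ t)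
    {a b : ℝ} (hℓ : ∀ p ∈ s, ℓ t p ∈ Set.Icc a b) :
    ∑ p ∈ s, hedgeWeight η ℓ (t + 1) p ≤ (∑ p ∈ s, hedgeWeight η ℓ t p) *
      exp (-(∑ p ∈ s, hedgeProb η ℓ s t p * ℓ t p) / η + (b - a) ^ 2 / (8 * η ^ 2)) := by
  have hW : 0 < ∑ p ∈ s, hedgeWeight η ℓ t p :=
    sum_pos (fun p _ => hedgeWeight_pos η ℓ t p) hs
  calc ∑ p ∈ s, hedgeWeight η ℓ (t + 1) p
      = (∑ p ∈ s, hedgeWeight η ℓ t p) *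
          ∑ p ∈ s, hedgeProb η ℓ s t p * exp (-(1 / η) * ℓ t p) := by
        rw [mul_sum]
        refine sum_congr rfl fun p _ => ?_
        rw [hedgeWeight_succ η ℓ ht, hedgeProb]
        field_simp
    _ ≤ _ := by
        gcongr
        refine (sum_mul_exp_le_exp_of_mem_Icc s (fun p _ => hedgeProb_nonneg η ℓ s t p)
          (sum_hedgeProb η ℓ hs t) hℓ _).trans_eq ?_
        ring_nf

theorem hedge_regret (hη : 0 < η) {s : Finset ι} {T : ℕ} {a b : ℝ}
    (hℓ : ∀ t ∈ Icc 1 T, ∀ p ∈ s, ℓ t p ∈ Set.Icc a b) {p : ι} (hp : p ∈ s) :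
    ∑ t ∈ Icc 1 T, ∑ i ∈ s, hedgeProb η ℓ s t i * ℓ t i ≤
      ∑ t ∈ Icc 1 T, ℓ t p + η * log #s + T * (b - a) ^ 2 / (8 * η) := by
  have hs : s.Nonempty := ⟨p, hp⟩
  have hpotential :=
    le_mul_exp_sum_of_le_mul_exp (f := fun t => ∑ i ∈ s, hedgeWeight η ℓ t i) fun t ht =>
      sum_hedgeWeight_succ_le η ℓ hs (mem_Icc.1 ht).1 (hℓ t ht)
  have hcard : (0 : ℝ) < #s := by exact_mod_cast hs.card_pos
  have hexp : exp (-(∑ t ∈ Icc 1 T, ℓ t p) / η) ≤ exp (log #s + ∑ t ∈ Icc 1 T,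
      (-(∑ i ∈ s, hedgeProb η ℓ s t i * ℓ t i) / η + (b - a) ^ 2 / (8 * η ^ 2))) := by
    calc exp (-(∑ t ∈ Icc 1 T, ℓ t p) / η) = hedgeWeight η ℓ (T + 1) p := by
          rw [hedgeWeight, Nat.add_sub_cancel]; ring_nf
      _ ≤ ∑ i ∈ s, hedgeWeight η ℓ (T + 1) i :=
          single_le_sum (fun i _ => (hedgeWeight_pos η ℓ _ i).le) hp
      _ ≤ _ := by simpa [exp_add, exp_log hcard] using hpotential
  rw [exp_le_exp, sum_add_distrib, ← sum_div, sum_neg_distrib, sum_const, Nat.card_Icc,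
    nsmul_eq_mul] at hexp
  field_simp at hexp ⊢
  push_cast at hexp
  linarith

end Hedge

theorem domkl_thm2_accuracy_general
    (T P : ℕ) (hP : 1 ≤ P)
    (η B R : ℝ) (hη : 0 < η)
    (y : ℕ → ℝ) (a : ℕ → ℕ → ℝ) (ℓstar : ℕ → ℕ → ℝ)
    (L : ℝ → ℝ → ℝ)
    (hconv : ∀ yy : ℝ, ConvexOn ℝ Set.univ fun u => L u yy)
    (ℓ : ℕ → ℕ → ℝ)
    (hℓ : ∀ t p, ℓ t p = L (a t p) (y t))
    (hbound : ∀ t ∈ Finset.Icc 1 T, ∀ p ∈ Finset.Icc 1 P, 0 ≤ ℓ t p ∧ ℓ t p ≤ B)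
    (hregret : ∀ p ∈ Finset.Icc 1 P,
      ∑ t ∈ Finset.Icc 1 T, ℓ t p ≤ (∑ t ∈ Finset.Icc 1 T, ℓstar t p) + R)
    (w q : ℕ → ℕ → ℝ)
    (hw : ∀ t p, w t p = Real.exp (-(1 / η) * ∑ τ ∈ Finset.Icc 1 (t - 1), ℓ τ p))
    (hq : ∀ t p, q t p = w t p / ∑ p' ∈ Finset.Icc 1 P, w t p') :
    (∑ t ∈ Finset.Icc 1 T, L (∑ p ∈ Finset.Icc 1 P, q t p * a t p) (y t))
      - ((Finset.Icc 1 P).inf' (Finset.nonempty_Icc.mpr hP)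
          fun p => ∑ t ∈ Finset.Icc 1 T, ℓstar t p) ≤
      R + (T : ℝ) * B ^ 2 / (8 * η) + η * Real.log P := by
  obtain rfl : w = hedgeWeight η ℓ := funext fun t => funext (hw t)
  obtain rfl : q = hedgeProb η ℓ (Icc 1 P) := funext fun t => funext (hq t)
  have hjensen (t : ℕ) : L (∑ p ∈ Icc 1 P, hedgeProb η ℓ (Icc 1 P) t p * a t p) (y t) ≤
      ∑ p ∈ Icc 1 P, hedgeProb η ℓ (Icc 1 P) t p * ℓ t p := by
    simpa only [smul_eq_mul, hℓ] using (hconv (y t)).map_sum_le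
      (fun p _ => hedgeProb_nonneg η ℓ _ t p) (sum_hedgeProb η ℓ (nonempty_Icc.2 hP) t)
      (fun p _ => Set.mem_univ (a t p))
  obtain ⟨p, hp, hmin⟩ :=
    exists_mem_eq_inf' (nonempty_Icc.2 hP) fun p => ∑ t ∈ Icc 1 T, ℓstar t p
  have hhedge := hedge_regret η ℓ hη (a := 0) (b := B) hbound hp
  rw [Nat.card_Icc, Nat.add_sub_cancel, sub_zero] at hhedge
  rw [hmin]
  linarith [sum_le_sum fun t (_ : t ∈ Icc 1 T) => hjensen t, hregret p hp]

/-- Theorem 2 of the paper, learning-accuracy part, non-asymptotic combined form. -/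
theorem domkl_thm2_accuracy
    (T P : ℕ) (hT : 1 ≤ T) (hP : 1 ≤ P)
    (η B R : ℝ) (hη : 0 < η) (hB : 0 ≤ B)
    (y : ℕ → ℝ) (a : ℕ → ℕ → ℝ) (ℓstar : ℕ → ℕ → ℝ)
    (L : ℝ → ℝ → ℝ)
    (hconv : ∀ yy : ℝ, ConvexOn ℝ Set.univ fun u => L u yy)
    (ℓ : ℕ → ℕ → ℝ)
    (hℓ : ∀ t p, ℓ t p = L (a t p) (y t))
    (hbound : ∀ t ∈ Finset.Icc 1 T, ∀ p ∈ Finset.Icc 1 P, 0 ≤ ℓ t p ∧ ℓ t p ≤ B)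
    (hregret : ∀ p ∈ Finset.Icc 1 P,
      ∑ t ∈ Finset.Icc 1 T, ℓ t p ≤ (∑ t ∈ Finset.Icc 1 T, ℓstar t p) + R)
    (w q : ℕ → ℕ → ℝ)
    (hw : ∀ t p, w t p = Real.exp (-(1 / η) * ∑ τ ∈ Finset.Icc 1 (t - 1), ℓ τ p))
    (hq : ∀ t p, q t p = w t p / ∑ p' ∈ Finset.Icc 1 P, w t p') :
    (∑ t ∈ Finset.Icc 1 T, L (∑ p ∈ Finset.Icc 1 P, q t p * a t p) (y t))
      - ((Finset.Icc 1 P).inf' (Finset.nonempty_Icc.mpr hP)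
          fun p => ∑ t ∈ Finset.Icc 1 T, ℓstar t p) ≤
      R + (T : ℝ) * B ^ 2 / (8 * η) + η * Real.log P :=
  domkl_thm2_accuracy_general T P hP η B R hη y a ℓstar L hconv ℓ hℓ hbound hregret w q hw hq
end
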